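/- Let c = (c1,c2) ∈ O² be primitive and d ∈ O monic, and write |d·c| = max(|d·c1|,|d·c2|). (i) Suppose a/r and a'/r' both lie on L(d·c), a·r' ≠ a'·r, and |d·c|² ≤ |r|·|r'|. Then |a/r − a'/r'| ≥ |d·c|/(|r|·|r'|), where the difference is the maximum over the two coordinates of the absolute value computed in F_q(t) ⊂ K_∞. (ii) Suppose a/r lies on L(d·c) with d(c1·a1 + c2·a2) = k·r, gcd(d,k) = 1, and |d·c|² ≤ |r|. Then there exist a monic r2 with |r| < |r2| and a2 ∈ O² such that a2/r2 lies on L(d·c), d(c1·(a2)₁ + c2·(a2)₂) = k·r2 (the same k), and |a/r − a2/r2| = |d·c|/(|r|·|r2|). -/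

import Mathlib

/-!
For (i), put `v = a r' - a' r`, so that `d (c · v) = (k - k') r r'`. If `k ≠ k'`, then
`|r r'| ≤ |d (c · v)| ≤ |d c| |v|`, and `|d c|² ≤ |r r'|` gives `|d c| ≤ |v|`. If `k = k'`, then
`c · v = 0`, so `v = w (-c₂, c₁)` with `w ≠ 0` because `c` is primitive; comparing determinants
gives `d ∣ w k`, hence `d ∣ w` and `|v| = |c| |w| ≥ |d c|`. The distance is `|v| / |r r'|`.

For (ii), as `gcd(a₁, a₂, r) = 1` there is `l` with `l a ≡ d (c₂, -c₁) (mod r)`, and any monic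
`r₂ ≡ l (mod r)` of degree `deg r + 1` yields `n` with `a r₂ - n r = d (c₂, -c₁)`. Then `n / r₂`
lies on the line with the same `k`, is reduced because `gcd(d, k) = 1`, and `|n| < |r₂|` because
`|d c| ≤ |d c|² ≤ |r|`.
-/

set_option autoImplicit false

noncomputable section

open Polynomial Matrix
open scoped Classical

variable {Fq : Type} [Field Fq] [Fintype Fq]

/-- The absolute value on `O = Fq[t]`: `|x| = q ^ deg x` for `x ≠ 0`, and `|0| = 0`. -/
def Oabs (x : Fq[X]) : ℝ := if x = 0 then 0 else (Fintype.card Fq : ℝ) ^ x.natDegree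

/-- The maximum norm on pairs of polynomials. -/
def Oabs2 (a : Fq[X] × Fq[X]) : ℝ := max (Oabs a.1) (Oabs a.2)

/-- A pair `c = (c₁, c₂)` is primitive if `gcd(c₁,c₂) = 1` and either `c₁` is monic,
or `c₁ = 0` and `c₂` is monic. -/
def Primitive (c : Fq[X] × Fq[X]) : Prop :=
  IsCoprime c.1 c.2 ∧ (c.1.Monic ∨ (c.1 = 0 ∧ c.2.Monic))

/-- `gcd(a, b, r) = 1`: every common divisor of `a`, `b` and `r` is a unit. -/
def CoprimeTriple (a b r : Fq[X]) : Prop :=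
  ∀ p : Fq[X], p ∣ a → p ∣ b → p ∣ r → IsUnit p

/-- `a/r` lies on the generalised line `L(d·c)`: there is `k` with
`d(c₁a₁ + c₂a₂) = k·r` and `gcd(d,k) = 1`. -/
def OnLine (d : Fq[X]) (c : Fq[X] × Fq[X]) (r : Fq[X]) (a : Fq[X] × Fq[X]) : Prop :=
  ∃ k : Fq[X], d * (c.1 * a.1 + c.2 * a.2) = k * r ∧ IsCoprime d k

/-- The embedding of `O = Fq[t]` into its fraction field `Fq(t)`. -/
def toR : Fq[X] →+* RatFunc Fq := algebraMap _ _

/-- The absolute value at infinity on `Fq(t)`: `|f| = q^{deg num f - deg denom f}`. -/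
def Rabs (f : RatFunc Fq) : ℝ :=
  if f = 0 then 0 else (Fintype.card Fq : ℝ) ^ f.intDegree

lemma Oabs_eq_cardPowDegree (x : Fq[X]) : Oabs x = (cardPowDegree x : ℝ) := by
  rw [Oabs, cardPowDegree_apply]
  split_ifs <;> simp

lemma Oabs_nonneg (x : Fq[X]) : 0 ≤ Oabs x := by
  rw [Oabs_eq_cardPowDegree]; exact_mod_cast cardPowDegree.nonneg x

lemma Oabs_pos {x : Fq[X]} (hx : x ≠ 0) : 0 < Oabs x := by
  rw [Oabs_eq_cardPowDegree]; exact_mod_cast cardPowDegree.pos hx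

lemma Oabs_mul (x y : Fq[X]) : Oabs (x * y) = Oabs x * Oabs y := by
  simp only [Oabs_eq_cardPowDegree, map_mul, Int.cast_mul]

lemma Oabs_neg (x : Fq[X]) : Oabs (-x) = Oabs x := by
  simp only [Oabs_eq_cardPowDegree, AbsoluteValue.map_neg]

lemma Oabs_lt_Oabs_iff {x y : Fq[X]} : Oabs x < Oabs y ↔ x.degree < y.degree := by
  simp only [Oabs_eq_cardPowDegree, Int.cast_lt]
  exact cardPowDegree_isEuclidean.map_lt_map_iff

lemma Oabs_le_Oabs_iff {x y : Fq[X]} : Oabs x ≤ Oabs y ↔ x.degree ≤ y.degree := by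
  simpa only [not_lt] using (Oabs_lt_Oabs_iff (x := y) (y := x)).not

lemma one_le_Oabs {x : Fq[X]} (hx : x ≠ 0) : 1 ≤ Oabs x := by
  simpa [Oabs] using Oabs_le_Oabs_iff.mpr (degree_one.trans_le (zero_le_degree_iff.mpr hx))

lemma Oabs_le_sq (x : Fq[X]) : Oabs x ≤ Oabs x ^ 2 := by
  rcases eq_or_ne x 0 with rfl | hx
  · simp [Oabs]
  · exact le_self_pow₀ (one_le_Oabs hx) two_ne_zero

lemma Oabs_add_le (x y : Fq[X]) : Oabs (x + y) ≤ max (Oabs x) (Oabs y) := by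
  rcases le_total (Oabs x) (Oabs y) with h | h
  · rw [max_eq_right h]
    exact Oabs_le_Oabs_iff.mpr ((degree_add_le x y).trans (max_le (Oabs_le_Oabs_iff.mp h) le_rfl))
  · rw [max_eq_left h]
    exact Oabs_le_Oabs_iff.mpr ((degree_add_le x y).trans (max_le le_rfl (Oabs_le_Oabs_iff.mp h)))

lemma Oabs_le_of_dvd {x y : Fq[X]} (h : x ∣ y) (hy : y ≠ 0) : Oabs x ≤ Oabs y :=
  Oabs_le_Oabs_iff.mpr (degree_le_of_dvd h hy)

lemma max_Oabs_mul_left (d x y : Fq[X]) :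
    max (Oabs (d * x)) (Oabs (d * y)) = Oabs d * max (Oabs x) (Oabs y) := by
  rw [Oabs_mul, Oabs_mul, mul_max_of_nonneg _ _ (Oabs_nonneg d)]

lemma Oabs_add_mul_le (x₁ x₂ v₁ v₂ : Fq[X]) :
    Oabs (x₁ * v₁ + x₂ * v₂) ≤ max (Oabs x₁) (Oabs x₂) * max (Oabs v₁) (Oabs v₂) := by
  refine (Oabs_add_le _ _).trans (max_le ?_ ?_) <;> rw [Oabs_mul] <;>
    gcongr <;> simp [Oabs_nonneg]

lemma Rabs_toR_div (p q : Fq[X]) (hq : q ≠ 0) : Rabs (toR p / toR q) = Oabs p / Oabs q := by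
  rcases eq_or_ne p 0 with rfl | hp
  · simp [Rabs, Oabs]
  have hq' : toR q ≠ 0 := RatFunc.algebraMap_ne_zero hq
  have hpq : toR p / toR q ≠ 0 := div_ne_zero (RatFunc.algebraMap_ne_zero hp) hq'
  have hdeg : (toR p / toR q).intDegree = (p.natDegree : ℤ) - q.natDegree := by
    have h := RatFunc.intDegree_mul hpq hq'
    have hp' : (toR p).intDegree = p.natDegree := RatFunc.intDegree_polynomial
    have hq'' : (toR q).intDegree = q.natDegree := RatFunc.intDegree_polynomial
    rw [div_mul_cancel₀ _ hq'] at h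
    omega
  have hcard : (Fintype.card Fq : ℝ) ≠ 0 := by positivity
  rw [Rabs, if_neg hpq, hdeg, zpow_sub₀ hcard, Oabs, Oabs, if_neg hp, if_neg hq]
  norm_cast

lemma Rabs_toR_div_sub_toR_div (p p' r r' : Fq[X]) (hr : r ≠ 0) (hr' : r' ≠ 0) :
    Rabs (toR p / toR r - toR p' / toR r') = Oabs (p * r' - p' * r) / (Oabs r * Oabs r') := by
  rw [← Oabs_mul, ← Rabs_toR_div _ _ (mul_ne_zero hr hr')]
  congr 1
  simp only [map_sub, map_mul]
  field_simp [toR, RatFunc.algebraMap_ne_zero hr, RatFunc.algebraMap_ne_zero hr']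

lemma max_Rabs_sub_eq (a a' : Fq[X] × Fq[X]) {r r' : Fq[X]} (hr : r ≠ 0) (hr' : r' ≠ 0) :
    max (Rabs (toR a.1 / toR r - toR a'.1 / toR r')) (Rabs (toR a.2 / toR r - toR a'.2 / toR r')) =
      max (Oabs (a.1 * r' - a'.1 * r)) (Oabs (a.2 * r' - a'.2 * r)) / (Oabs r * Oabs r') := by
  rw [Rabs_toR_div_sub_toR_div _ _ _ _ hr hr', Rabs_toR_div_sub_toR_div _ _ _ _ hr hr',
    max_div_div_right (mul_nonneg (Oabs_nonneg r) (Oabs_nonneg r'))]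

lemma IsCoprime.exists_eq_of_mul_add_mul_eq_zero {R : Type*} [CommRing R] {c₁ c₂ v₁ v₂ : R}
    (hc : IsCoprime c₁ c₂) (h : c₁ * v₁ + c₂ * v₂ = 0) : ∃ w, v₁ = -(c₂ * w) ∧ v₂ = c₁ * w := by
  obtain ⟨u, u', hu⟩ := hc
  exact ⟨u * v₂ - u' * v₁, by linear_combination u * h - v₁ * hu,
    by linear_combination u' * h - v₂ * hu⟩

lemma max_Oabs_mul_le_of_same_k {c : Fq[X] × Fq[X]} (hc : IsCoprime c.1 c.2)
    {d k r r' : Fq[X]} {a a' : Fq[X] × Fq[X]} (hd : d ≠ 0) (hr : r ≠ 0) (hdk : IsCoprime d k)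
    (hk : d * (c.1 * a.1 + c.2 * a.2) = k * r) (hk' : d * (c.1 * a'.1 + c.2 * a'.2) = k * r')
    (hne : ¬ (a.1 * r' = a'.1 * r ∧ a.2 * r' = a'.2 * r)) :
    max (Oabs (d * c.1)) (Oabs (d * c.2)) ≤
      max (Oabs (a.1 * r' - a'.1 * r)) (Oabs (a.2 * r' - a'.2 * r)) := by
  have hcv : c.1 * (a.1 * r' - a'.1 * r) + c.2 * (a.2 * r' - a'.2 * r) = 0 := by
    refine (mul_eq_zero.mp ?_).resolve_left hd
    linear_combination r' * hk - r * hk'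
  obtain ⟨w, hv₁, hv₂⟩ := hc.exists_eq_of_mul_add_mul_eq_zero hcv
  have hw : w ≠ 0 := by
    rintro rfl
    exact hne ⟨by linear_combination hv₁, by linear_combination hv₂⟩
  have hdw : d ∣ w := by
    refine hdk.dvd_of_dvd_mul_right ⟨a.2 * a'.1 - a.1 * a'.2, mul_right_cancel₀ hr ?_⟩
    linear_combination -w * hk - d * a.1 * hv₂ + d * a.2 * hv₁
  rw [max_Oabs_mul_left, hv₁, hv₂, Oabs_neg, Oabs_mul, Oabs_mul, max_comm (Oabs c.2 * _),
    ← max_mul_of_nonneg _ _ (Oabs_nonneg w), mul_comm (Oabs d)]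
  exact mul_le_mul_of_nonneg_left (Oabs_le_of_dvd hdw hw)
    ((Oabs_nonneg _).trans (le_max_left _ _))

lemma max_Oabs_mul_le_of_ne_k {c : Fq[X] × Fq[X]} {d k k' r r' : Fq[X]}
    {a a' : Fq[X] × Fq[X]} (hkk : k ≠ k')
    (hk : d * (c.1 * a.1 + c.2 * a.2) = k * r) (hk' : d * (c.1 * a'.1 + c.2 * a'.2) = k' * r')
    (hbig : (max (Oabs (d * c.1)) (Oabs (d * c.2))) ^ 2 ≤ Oabs r * Oabs r') :
    max (Oabs (d * c.1)) (Oabs (d * c.2)) ≤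
      max (Oabs (a.1 * r' - a'.1 * r)) (Oabs (a.2 * r' - a'.2 * r)) := by
  set D := max (Oabs (d * c.1)) (Oabs (d * c.2))
  set V := max (Oabs (a.1 * r' - a'.1 * r)) (Oabs (a.2 * r' - a'.2 * r))
  have hD : 0 ≤ D := (Oabs_nonneg _).trans (le_max_left _ _)
  have hV : 0 ≤ V := (Oabs_nonneg _).trans (le_max_left _ _)
  have hDV : D ^ 2 ≤ D * V := calc
    D ^ 2 ≤ Oabs r * Oabs r' := hbig
    _ ≤ Oabs ((k - k') * (r * r')) := by
      rw [Oabs_mul, Oabs_mul]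
      exact le_mul_of_one_le_left (mul_nonneg (Oabs_nonneg r) (Oabs_nonneg r'))
        (one_le_Oabs (sub_ne_zero.mpr hkk))
    _ = Oabs (d * c.1 * (a.1 * r' - a'.1 * r) + d * c.2 * (a.2 * r' - a'.2 * r)) := by
      congr 1
      linear_combination r * hk' - r' * hk
    _ ≤ D * V := Oabs_add_mul_le _ _ _ _
  nlinarith

lemma CoprimeTriple.exists_add_add_eq_one {K : Type} [Field K] {a b r : K[X]}
    (h : CoprimeTriple a b r) : ∃ α β γ : K[X], α * a + β * b + γ * r = 1 := by
  have hg : IsCoprime (EuclideanDomain.gcd a b) r := IsRelPrime.isCoprime fun p hpg hpr =>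
    h p (hpg.trans (EuclideanDomain.gcd_dvd_left a b))
      (hpg.trans (EuclideanDomain.gcd_dvd_right a b)) hpr
  obtain ⟨u, v, huv⟩ := hg
  refine ⟨u * EuclideanDomain.gcdA a b, u * EuclideanDomain.gcdB a b, v, ?_⟩
  rw [← huv, EuclideanDomain.gcd_eq_gcd_ab]
  ring

lemma CoprimeTriple.exists_dvd_mul_sub {K : Type} [Field K] {a₁ a₂ r e₁ e₂ : K[X]}
    (h : CoprimeTriple a₁ a₂ r) (he : r ∣ a₂ * e₁ - a₁ * e₂) :
    ∃ l : K[X], r ∣ l * a₁ - e₁ ∧ r ∣ l * a₂ - e₂ := by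
  obtain ⟨α, β, γ, hb⟩ := h.exists_add_add_eq_one
  obtain ⟨m, hm⟩ := he
  exact ⟨α * e₁ + β * e₂, ⟨-(β * m) - γ * e₁, by linear_combination -β * hm + e₁ * hb⟩,
    ⟨α * m - γ * e₂, by linear_combination α * hm + e₂ * hb⟩⟩

lemma Polynomial.Monic.exists_monic_natDegree_eq_succ_dvd_sub {R : Type*} [CommRing R] [IsDomain R]
    {r : R[X]} (hr : r.Monic) (l : R[X]) :
    ∃ r₂ : R[X], r₂.Monic ∧ r₂.natDegree = r.natDegree + 1 ∧ r ∣ r₂ - l := by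
  have hlt : (l %ₘ r).degree < (r * X).degree :=
    (degree_modByMonic_lt l hr).trans_le (degree_le_mul_left r X_ne_zero)
  refine ⟨r * X + l %ₘ r, (hr.mul monic_X).add_of_left hlt, ?_, X - l /ₘ r, ?_⟩
  · rw [natDegree_add_eq_left_of_degree_lt hlt, natDegree_mul_X hr.ne_zero]
  · linear_combination modByMonic_add_div l r

lemma exists_neighbour {K : Type} [Field K] {c a : K[X] × K[X]} {d k r : K[X]} (hr : r.Monic)
    (htri : CoprimeTriple a.1 a.2 r) (hk : d * (c.1 * a.1 + c.2 * a.2) = k * r) :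
    ∃ r₂ n₁ n₂ : K[X], r₂.Monic ∧ r₂.natDegree = r.natDegree + 1 ∧
      a.1 * r₂ - n₁ * r = d * c.2 ∧ a.2 * r₂ - n₂ * r = -(d * c.1) := by
  obtain ⟨l, ⟨m₁, hm₁⟩, ⟨m₂, hm₂⟩⟩ :=
    htri.exists_dvd_mul_sub (e₁ := d * c.2) (e₂ := -(d * c.1)) ⟨k, by linear_combination hk⟩
  obtain ⟨r₂, hr₂, hdeg, s, hs⟩ := hr.exists_monic_natDegree_eq_succ_dvd_sub l
  exact ⟨r₂, a.1 * s + m₁, a.2 * s + m₂, hr₂, hdeg, by linear_combination a.1 * hs + hm₁,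
    by linear_combination a.2 * hs + hm₂⟩

section Neighbour

variable {R : Type*} [CommRing R] [IsDomain R] {c a n : R × R} {d k r r₂ : R}

lemma line_eq_of_neighbour (hr : r ≠ 0) (hk : d * (c.1 * a.1 + c.2 * a.2) = k * r)
    (h₁ : a.1 * r₂ - n.1 * r = d * c.2) (h₂ : a.2 * r₂ - n.2 * r = -(d * c.1)) :
    d * (c.1 * n.1 + c.2 * n.2) = k * r₂ :=
  mul_right_cancel₀ hr (by linear_combination -(d * c.1) * h₁ - (d * c.2) * h₂ + r₂ * hk)

lemma det_eq_of_neighbour (hr : r ≠ 0) (hk : d * (c.1 * a.1 + c.2 * a.2) = k * r)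
    (h₁ : a.1 * r₂ - n.1 * r = d * c.2) (h₂ : a.2 * r₂ - n.2 * r = -(d * c.1)) :
    k = n.2 * a.1 - n.1 * a.2 :=
  mul_right_cancel₀ hr (by linear_combination -a.2 * h₁ + a.1 * h₂ - hk)

end Neighbour

lemma coprimeTriple_of_neighbour {K : Type} [Field K] {c a n : K[X] × K[X]} {d k r r₂ : K[X]}
    (hc : IsCoprime c.1 c.2) (hdk : IsCoprime d k) (hr : r ≠ 0)
    (hk : d * (c.1 * a.1 + c.2 * a.2) = k * r)
    (h₁ : a.1 * r₂ - n.1 * r = d * c.2) (h₂ : a.2 * r₂ - n.2 * r = -(d * c.1)) :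
    CoprimeTriple n.1 n.2 r₂ := by
  intro p hp₁ hp₂ hpr₂
  have hpk : p ∣ k := by
    rw [det_eq_of_neighbour hr hk h₁ h₂]
    exact dvd_sub (hp₂.mul_right _) (hp₁.mul_right _)
  have hpd : p ∣ d := by
    obtain ⟨u, v, huv⟩ := hc
    rw [show d = u * (n.2 * r - a.2 * r₂) + v * (a.1 * r₂ - n.1 * r) by
      linear_combination (-d) * huv + u * h₂ - v * h₁]
    exact dvd_add (dvd_mul_of_dvd_right (dvd_sub (hp₂.mul_right _) (hpr₂.mul_left _)) _)
      (dvd_mul_of_dvd_right (dvd_sub (hpr₂.mul_left _) (hp₁.mul_right _)) _)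
  exact hdk.isUnit_of_dvd' hpd hpk

lemma Oabs_lt_of_mul_sub_mul_eq {x n e r r₂ : Fq[X]} (hr₂ : r₂ ≠ 0) (hx : Oabs x < Oabs r)
    (he : Oabs e < Oabs r * Oabs r₂) (h : x * r₂ - n * r = e) : Oabs n < Oabs r₂ := by
  refine lt_of_mul_lt_mul_right ?_ (Oabs_nonneg r)
  rw [← Oabs_mul, show n * r = x * r₂ + -e by linear_combination -h, mul_comm (Oabs r₂)]
  refine (Oabs_add_le _ _).trans_lt (max_lt ?_ (by rwa [Oabs_neg]))
  rw [Oabs_mul]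
  exact mul_lt_mul_of_pos_right hx (Oabs_pos hr₂)

/-- Spacing of rational points on a generalised line `L(d·c)`:
(i) two distinct points `a/r ≠ a'/r'` on `L(d·c)` with `|d·c|² ≤ |r||r'|` are at
distance at least `|d·c|/(|r||r'|)`; (ii) every point `a/r` on `L(d·c)`, say with
`d(c·a) = k·r`, `gcd(d,k) = 1` and `|d·c|² ≤ |r|`, has a neighbour `a₂/r₂` on `L(d·c)`
with the same `k`, `|r| < |r₂|` and `|a/r − a₂/r₂| = |d·c|/(|r||r₂|)`. -/
theorem stmt_15 (Fq : Type) [Field Fq] [Fintype Fq]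
    (c : Fq[X] × Fq[X]) (hc : Primitive c) (d : Fq[X]) (hd : d.Monic) :
    (∀ r r' : Fq[X], ∀ a a' : Fq[X] × Fq[X],
      r.Monic → r'.Monic →
      Oabs2 a < Oabs r → CoprimeTriple a.1 a.2 r → OnLine d c r a →
      Oabs2 a' < Oabs r' → CoprimeTriple a'.1 a'.2 r' → OnLine d c r' a' →
      ¬ (a.1 * r' = a'.1 * r ∧ a.2 * r' = a'.2 * r) →
      (max (Oabs (d * c.1)) (Oabs (d * c.2))) ^ 2 ≤ Oabs r * Oabs r' →
      max (Oabs (d * c.1)) (Oabs (d * c.2)) / (Oabs r * Oabs r') ≤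
        max (Rabs (toR a.1 / toR r - toR a'.1 / toR r'))
            (Rabs (toR a.2 / toR r - toR a'.2 / toR r'))) ∧
    (∀ r : Fq[X], ∀ a : Fq[X] × Fq[X], ∀ k : Fq[X],
      r.Monic → Oabs2 a < Oabs r → CoprimeTriple a.1 a.2 r →
      d * (c.1 * a.1 + c.2 * a.2) = k * r → IsCoprime d k →
      (max (Oabs (d * c.1)) (Oabs (d * c.2))) ^ 2 ≤ Oabs r →
      ∃ r2 : Fq[X], ∃ a2 : Fq[X] × Fq[X],
        r2.Monic ∧ Oabs r < Oabs r2 ∧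
        Oabs2 a2 < Oabs r2 ∧ CoprimeTriple a2.1 a2.2 r2 ∧
        d * (c.1 * a2.1 + c.2 * a2.2) = k * r2 ∧
        max (Rabs (toR a.1 / toR r - toR a2.1 / toR r2))
            (Rabs (toR a.2 / toR r - toR a2.2 / toR r2))
          = max (Oabs (d * c.1)) (Oabs (d * c.2)) / (Oabs r * Oabs r2)) := by
  constructor
  · rintro r r' a a' hr hr' - - ⟨k, hk, hdk⟩ - - ⟨k', hk', -⟩ hne hbig
    rw [max_Rabs_sub_eq a a' hr.ne_zero hr'.ne_zero]
    refine div_le_div_of_nonneg_right ?_ (mul_nonneg (Oabs_nonneg r) (Oabs_nonneg r'))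
    rcases eq_or_ne k k' with rfl | hkk
    · exact max_Oabs_mul_le_of_same_k hc.1 hd.ne_zero hr.ne_zero hdk hk hk' hne
    · exact max_Oabs_mul_le_of_ne_k hkk hk hk' hbig
  · intro r a k hr ha htri hk hdk hbig
    obtain ⟨r₂, n₁, n₂, hr₂, hdeg, h₁, h₂⟩ := exists_neighbour hr htri hk
    have hrr₂ : Oabs r < Oabs r₂ := Oabs_lt_Oabs_iff.mpr (degree_lt_degree (by omega))
    have hD : max (Oabs (d * c.1)) (Oabs (d * c.2)) < Oabs r * Oabs r₂ := calc
      _ ≤ (max (Oabs (d * c.1)) (Oabs (d * c.2))) ^ 2 := by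
        rcases max_choice (Oabs (d * c.1)) (Oabs (d * c.2)) with h | h <;>
          rw [h] <;> exact Oabs_le_sq _
      _ ≤ Oabs r := hbig
      _ < Oabs r * Oabs r₂ :=
        lt_mul_of_one_lt_right (Oabs_pos hr.ne_zero) ((one_le_Oabs hr.ne_zero).trans_lt hrr₂)
    refine ⟨r₂, (n₁, n₂), hr₂, hrr₂, max_lt ?_ ?_,
      coprimeTriple_of_neighbour hc.1 hdk hr.ne_zero hk h₁ h₂,
      line_eq_of_neighbour hr.ne_zero hk h₁ h₂, ?_⟩
    · exact Oabs_lt_of_mul_sub_mul_eq hr₂.ne_zero ((le_max_left _ _).trans_lt ha)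
        ((le_max_right _ _).trans_lt hD) h₁
    · exact Oabs_lt_of_mul_sub_mul_eq hr₂.ne_zero ((le_max_right _ _).trans_lt ha)
        (by rw [Oabs_neg]; exact (le_max_left _ _).trans_lt hD) h₂
    · rw [max_Rabs_sub_eq _ _ hr.ne_zero hr₂.ne_zero, h₁, h₂, Oabs_neg, max_comm]

end
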